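/- Let α_i > 0 (i = 1,…,s) and β > 0, let ℳ = {M_0, M_1, M_2} be a triple of (n+m) × (n+m) matrices, and suppose T_ℳ is well-defined. Then T_ℳ is continuous: for any sequence {(u^k, w^k, z^k)} with z^k = T_ℳ(u^k, w^k) converging to (u, w, z), one has z = T_ℳ(u, w). -/

import Mathlib

open Matrix Filter Topology

noncomputable section

/-- Spectral norm (largest singular value) of a real matrix. -/
def specNorm {p q : Type*} [Fintype p] [Fintype q] [DecidableEq q]
    (M : Matrix p q ℝ) : ℝ :=
  ‖LinearMap.toContinuousLinearMap (Matrix.toEuclideanLin M)‖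

/-- The positive semidefinite square root of a positive semidefinite matrix, as in the
older Mathlib (`Matrix.PosSemidef.sqrt`, since removed). -/
def Matrix.PosSemidef.sqrt {n : Type*} [Fintype n] [DecidableEq n]
    {A : Matrix n n ℝ} (hA : A.PosSemidef) : Matrix n n ℝ :=
  (hA.1.eigenvectorUnitary : Matrix n n ℝ) *
    diagonal ((↑) ∘ (Real.sqrt ∘ hA.1.eigenvalues)) *
    (star hA.1.eigenvectorUnitary : Matrix n n ℝ)

/-- Condition-M for a triple of matrices: `M0 = M1 + M2`, `H := M0 + M2` is symmetric
positive definite, and `‖H^{-1/2} M2 H^{-1/2}‖₂ < 1/2` (here `H^{-1/2}` is the positive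
semidefinite square root of `H⁻¹`). -/
def ConditionM {d : Type*} [Fintype d] [DecidableEq d] (M0 M1 M2 : Matrix d d ℝ) : Prop :=
  M0 = M1 + M2 ∧ ∃ hH : (M0 + M2).PosDef,
    specNorm (hH.inv.posSemidef.sqrt * M2 * hH.inv.posSemidef.sqrt) < 1 / 2

/-- The cost functional defining the proximity operator `prox_{φ,H}` at input `x`. -/
def proxCost {ι : Type*} [Fintype ι] (φ : (ι → ℝ) → EReal) (H : Matrix ι ι ℝ)
    (x u : ι → ℝ) : EReal :=
  ((((1 : ℝ) / 2) * ((u - x) ⬝ᵥ H.mulVec (u - x)) : ℝ) : EReal) + φ u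

/-- `p = prox_{φ,H}(x)`: `p` is the unique minimizer of the prox cost. -/
def IsProx {ι : Type*} [Fintype ι] (φ : (ι → ℝ) → EReal) (H : Matrix ι ι ℝ)
    (x p : ι → ℝ) : Prop :=
  (∀ u, proxCost φ H x p ≤ proxCost φ H x u) ∧
  ∀ q, (∀ u, proxCost φ H x q ≤ proxCost φ H x u) → q = p

/-- Proper lower semicontinuous convex extended-real-valued function. -/
def ProperConvexLsc {ι : Type*} [Fintype ι] (f : (ι → ℝ) → EReal) : Prop :=
  (∃ x, f x ≠ ⊤) ∧ (∀ x, f x ≠ ⊥) ∧ LowerSemicontinuous f ∧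
  ∀ x y : ι → ℝ, ∀ t : ℝ, 0 < t → t < 1 →
    f (t • x + (1 - t) • y) ≤ (t : EReal) * f x + ((1 - t : ℝ) : EReal) * f y

/-- Scaling of an extended-real-valued function by a real constant. -/
def smulF {V : Type*} (c : ℝ) (φ : V → EReal) : V → EReal := fun u => (c : EReal) * φ u

/-- The conjugate of the indicator of `C = {b}`: `ι_C*(y) = ⟨y, b⟩`. -/
def iotaCstar {m : ℕ} (b : Fin m → ℝ) : (Fin m → ℝ) → EReal :=
  fun y => ((y ⬝ᵥ b : ℝ) : EReal)

variable {s m : ℕ} {n : Fin s → ℕ}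

/-- Index type for the concatenated variable `x = (x_1, …, x_s)`. -/
abbrev XIdx (n : Fin s → ℕ) := (i : Fin s) × Fin (n i)

/-- Index type for the full variable `v = (x, y)`. -/
abbrev FIdx (n : Fin s → ℕ) (m : ℕ) := XIdx n ⊕ Fin m

/-- The `i`-th block of a concatenated vector. -/
def blk (x : XIdx n → ℝ) (i : Fin s) : Fin (n i) → ℝ := fun j => x ⟨i, j⟩

/-- The matrix `A = [A_1 … A_s]`. -/
def bigA (A : ∀ i : Fin s, Matrix (Fin m) (Fin (n i)) ℝ) : Matrix (Fin m) (XIdx n) ℝ :=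
  Matrix.of fun r p => A p.1 r p.2

/-- The separable objective `∑ f_i(x_i)`. -/
def objSum (f : ∀ i : Fin s, (Fin (n i) → ℝ) → EReal) (x : XIdx n → ℝ) : EReal :=
  ∑ i, f i (blk x i)

/-- `∑ A_i x_i`. -/
def sumAx (A : ∀ i : Fin s, Matrix (Fin m) (Fin (n i)) ℝ) (x : XIdx n → ℝ) : Fin m → ℝ :=
  ∑ i, (A i).mulVec (blk x i)

/-- `x` is a solution of problem (P). -/
def IsSolution (f : ∀ i : Fin s, (Fin (n i) → ℝ) → EReal)
    (A : ∀ i : Fin s, Matrix (Fin m) (Fin (n i)) ℝ) (b : Fin m → ℝ)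
    (x : XIdx n → ℝ) : Prop :=
  sumAx A x = b ∧ ∀ z : XIdx n → ℝ, sumAx A z = b → objSum f x ≤ objSum f z

/-- `b ∈ A(ri(dom(∑ f_i)))` where `ri` is the relative (intrinsic) interior. -/
def RiCond (f : ∀ i : Fin s, (Fin (n i) → ℝ) → EReal)
    (A : ∀ i : Fin s, Matrix (Fin m) (Fin (n i)) ℝ) (b : Fin m → ℝ) : Prop :=
  b ∈ (fun x => sumAx A x) '' intrinsicInterior ℝ {x : XIdx n → ℝ | objSum f x ≠ ⊤}

/-- The `x`-part of a full vector. -/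
def xpart (v : FIdx n m → ℝ) : XIdx n → ℝ := fun p => v (Sum.inl p)

/-- The `y`-part of a full vector. -/
def ypart (v : FIdx n m → ℝ) : Fin m → ℝ := fun r => v (Sum.inr r)

/-- The function `Φ(x_1,…,x_s,y) = ∑ f_i(x_i) + ι_C*(y)`. -/
def PhiFun (f : ∀ i : Fin s, (Fin (n i) → ℝ) → EReal) (b : Fin m → ℝ)
    (v : FIdx n m → ℝ) : EReal :=
  objSum f (xpart v) + iotaCstar b (ypart v)

/-- The diagonal matrix `R = diag((β/α_1)I, …, (β/α_s)I, (1/β)I)`. -/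
def Rmat (α : Fin s → ℝ) (β : ℝ) : Matrix (FIdx n m) (FIdx n m) ℝ :=
  Matrix.diagonal (Sum.elim (fun p : XIdx n => β / α p.1) fun _ => 1 / β)

/-- The inverse `R⁻¹` of the diagonal matrix `R`. -/
def Rinv (α : Fin s → ℝ) (β : ℝ) : Matrix (FIdx n m) (FIdx n m) ℝ :=
  Matrix.diagonal (Sum.elim (fun p : XIdx n => α p.1 / β) fun _ => β)

/-- The expansive matrix `E = [[I, −P⁻¹Aᵀ],[βA, I]]`. -/
def Emat (A : ∀ i : Fin s, Matrix (Fin m) (Fin (n i)) ℝ) (α : Fin s → ℝ) (β : ℝ) :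
    Matrix (FIdx n m) (FIdx n m) ℝ :=
  Matrix.fromBlocks 1 (-(Matrix.diagonal (fun p : XIdx n => α p.1 / β) * (bigA A)ᵀ))
    (β • bigA A) 1

/-- The skew-symmetric matrix `S_A = [[0, −Aᵀ],[A, 0]]`. -/
def SAmat (A : ∀ i : Fin s, Matrix (Fin m) (Fin (n i)) ℝ) :
    Matrix (FIdx n m) (FIdx n m) ℝ :=
  Matrix.fromBlocks 0 (-(bigA A)ᵀ) (bigA A) 0

/-- `w = 𝒯(v)`, where `𝒯(x_1,…,x_s,y) = (prox_{(α_1/β)f_1}x_1, …, prox_{(α_s/β)f_s}x_s,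
prox_{β ι_C*}y)`. -/
def isT (f : ∀ i : Fin s, (Fin (n i) → ℝ) → EReal) (b : Fin m → ℝ)
    (α : Fin s → ℝ) (β : ℝ) (v w : FIdx n m → ℝ) : Prop :=
  (∀ i, IsProx (smulF (α i / β) (f i)) 1 (blk (xpart v) i) (blk (xpart w) i)) ∧
  IsProx (smulF β (iotaCstar b)) 1 (ypart v) (ypart w)

/-- `w = T_ℳ(u₁, u₂)`, i.e. `w = 𝒯((E − R⁻¹M₀)w + R⁻¹M₁u₁ + R⁻¹M₂u₂)`. -/
def isTM (f : ∀ i : Fin s, (Fin (n i) → ℝ) → EReal)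
    (A : ∀ i : Fin s, Matrix (Fin m) (Fin (n i)) ℝ) (b : Fin m → ℝ)
    (α : Fin s → ℝ) (β : ℝ) (M0 M1 M2 : Matrix (FIdx n m) (FIdx n m) ℝ)
    (u1 u2 w : FIdx n m → ℝ) : Prop :=
  isT f b α β ((Emat A α β - Rinv α β * M0).mulVec w + (Rinv α β * M1).mulVec u1
    + (Rinv α β * M2).mulVec u2) w

/-- `T_ℳ` is well-defined. -/
def TMWellDefined (f : ∀ i : Fin s, (Fin (n i) → ℝ) → EReal)
    (A : ∀ i : Fin s, Matrix (Fin m) (Fin (n i)) ℝ) (b : Fin m → ℝ)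
    (α : Fin s → ℝ) (β : ℝ) (M0 M1 M2 : Matrix (FIdx n m) (FIdx n m) ℝ) : Prop :=
  ∀ u1 u2 : FIdx n m → ℝ, ∃! w, isTM f A b α β M0 M1 M2 u1 u2 w

/-! The graph of the proximity operator of a proper lsc convex function is closed: the
minimality inequalities pass to the limit by lower semicontinuity, and the limit minimizer is
unique because the prox cost is strongly convex. `T_ℳ` is a prox map composed with an affine
map, so its graph is closed as well. -/

theorem Continuous.coe_ereal_add_const {X : Type*} [TopologicalSpace X] {g : X → ℝ}
    (hg : Continuous g) (c : EReal) : Continuous fun x => (g x : EReal) + c :=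
  continuous_iff_continuousAt.2 fun _ =>
    (EReal.continuousAt_add (.inl (EReal.coe_ne_top _)) (.inl (EReal.coe_ne_bot _))).comp
      ((continuous_coe_real_ereal.comp hg).prodMk continuous_const).continuousAt

theorem EReal.continuous_const_mul {c : ℝ} (hc : c ≠ 0) :
    Continuous fun a : EReal => (c : EReal) * a :=
  have hc' : (c : EReal) ≠ 0 := by exact_mod_cast hc
  continuous_iff_continuousAt.2 fun _ =>
    (EReal.continuousAt_mul (.inl hc') (.inl hc')
      (.inl (EReal.coe_ne_bot c)) (.inl (EReal.coe_ne_top c))).comp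
      (continuous_const.prodMk continuous_id).continuousAt

section Prox

variable {ι : Type*} [Fintype ι]

theorem continuous_proxCost_left (φ : (ι → ℝ) → EReal) (H : Matrix ι ι ℝ) (u : ι → ℝ) :
    Continuous fun x => proxCost φ H x u :=
  (show Continuous fun x => _ by fun_prop).coe_ereal_add_const (φ u)

theorem lowerSemicontinuous_proxCost {φ : (ι → ℝ) → EReal} (hφ : LowerSemicontinuous φ)
    (H : Matrix ι ι ℝ) :
    LowerSemicontinuous fun xu : (ι → ℝ) × (ι → ℝ) => proxCost φ H xu.1 xu.2 := by
  have hquad : Continuous fun xu : (ι → ℝ) × (ι → ℝ) =>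
      (((1 : ℝ) / 2 * ((xu.2 - xu.1) ⬝ᵥ H.mulVec (xu.2 - xu.1)) : ℝ) : EReal) :=
    continuous_coe_real_ereal.comp (by fun_prop)
  exact hquad.lowerSemicontinuous.add' (hφ.comp continuous_snd) fun _ =>
    EReal.continuousAt_add (.inl (EReal.coe_ne_top _)) (.inl (EReal.coe_ne_bot _))

theorem isClosed_setOf_forall_proxCost_le {φ : (ι → ℝ) → EReal} (hφ : LowerSemicontinuous φ)
    (H : Matrix ι ι ℝ) :
    IsClosed {xp : (ι → ℝ) × (ι → ℝ) | ∀ u, proxCost φ H xp.1 xp.2 ≤ proxCost φ H xp.1 u} := by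
  simp only [Set.ofPred_forall]
  exact isClosed_iInter fun u => (lowerSemicontinuous_proxCost hφ H).isClosed_epigraph.preimage
    (continuous_id.prodMk ((continuous_proxCost_left φ H u).comp continuous_fst))

theorem midpoint_dotProduct_self (a b : ι → ℝ) :
    ((1 / 2 : ℝ) • a + (1 / 2 : ℝ) • b) ⬝ᵥ ((1 / 2 : ℝ) • a + (1 / 2 : ℝ) • b) =
      a ⬝ᵥ a / 2 + b ⬝ᵥ b / 2 - (a - b) ⬝ᵥ (a - b) / 4 := by
  simp only [add_dotProduct, dotProduct_add, smul_dotProduct, dotProduct_smul, sub_dotProduct,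
    dotProduct_sub, smul_eq_mul, dotProduct_comm b a]
  ring

theorem exists_eq_coe_of_forall_proxCost_le {φ : (ι → ℝ) → EReal} (hproper : ∃ v, φ v ≠ ⊤)
    (hbot : ∀ v, φ v ≠ ⊥) {H : Matrix ι ι ℝ} {x p : ι → ℝ}
    (hp : ∀ u, proxCost φ H x p ≤ proxCost φ H x u) : ∃ r : ℝ, φ p = r := by
  obtain ⟨v, hv⟩ := hproper
  refine ⟨(φ p).toReal, (EReal.coe_toReal (fun htop => ?_) (hbot p)).symm⟩
  have := (hp v).trans_lt (EReal.add_lt_top (EReal.coe_ne_top _) hv)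
  rw [proxCost, htop, EReal.coe_add_top] at this
  exact this.false

theorem eq_of_forall_proxCost_le [DecidableEq ι] {φ : (ι → ℝ) → EReal} (hproper : ∃ v, φ v ≠ ⊤)
    (hbot : ∀ v, φ v ≠ ⊥)
    (hconv : ∀ a b : ι → ℝ, ∀ t : ℝ, 0 < t → t < 1 →
      φ (t • a + (1 - t) • b) ≤ (t : EReal) * φ a + ((1 - t : ℝ) : EReal) * φ b)
    {x p q : ι → ℝ} (hp : ∀ u, proxCost φ 1 x p ≤ proxCost φ 1 x u)
    (hq : ∀ u, proxCost φ 1 x q ≤ proxCost φ 1 x u) : q = p := by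
  -- The midpoint `m` would beat the common minimal cost by `‖p - q‖² / 8`.
  set m := (1 / 2 : ℝ) • p + (1 - 1 / 2 : ℝ) • q
  obtain ⟨rp, hφp⟩ := exists_eq_coe_of_forall_proxCost_le hproper hbot hp
  obtain ⟨rq, hφq⟩ := exists_eq_coe_of_forall_proxCost_le hproper hbot hq
  have hφm : φ m ≤ (rp / 2 + rq / 2 : ℝ) := by
    have := hconv p q (1 / 2) (by norm_num) (by norm_num)
    rw [hφp, hφq, ← EReal.coe_mul, ← EReal.coe_mul, ← EReal.coe_add] at this
    convert this using 2
    ring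
  have hpq := hp q
  have hqp := hq p
  have hpm := (hp m).trans (add_le_add le_rfl hφm)
  simp only [proxCost, Matrix.one_mulVec] at hpq hqp hpm
  rw [hφp, hφq, ← EReal.coe_add, ← EReal.coe_add, EReal.coe_le_coe_iff] at hpq hqp
  rw [hφp, ← EReal.coe_add, ← EReal.coe_add, EReal.coe_le_coe_iff] at hpm
  have hmid : m - x = (1 / 2 : ℝ) • (p - x) + (1 / 2 : ℝ) • (q - x) := by
    ext j; simp only [m, Pi.add_apply, Pi.sub_apply, Pi.smul_apply, smul_eq_mul]; ring
  rw [hmid, midpoint_dotProduct_self, sub_sub_sub_cancel_right] at hpm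
  have hsq : (q - p) ⬝ᵥ (q - p) = 0 := by
    rw [← neg_sub, neg_dotProduct, dotProduct_neg, neg_neg]
    exact le_antisymm (by linarith) (Finset.sum_nonneg fun j _ => mul_self_nonneg _)
  exact sub_eq_zero.1 (dotProduct_self_eq_zero.1 hsq)

theorem isProx_of_tendsto [DecidableEq ι] {φ : (ι → ℝ) → EReal} (hφ : ProperConvexLsc φ)
    {x p : ℕ → ι → ℝ} {xlim plim : ι → ℝ} (hx : Tendsto x atTop (𝓝 xlim))
    (hp : Tendsto p atTop (𝓝 plim)) (hprox : ∀ k, IsProx φ 1 (x k) (p k)) :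
    IsProx φ 1 xlim plim := by
  obtain ⟨hproper, hbot, hlsc, hconv⟩ := hφ
  have hmin := (isClosed_setOf_forall_proxCost_le hlsc 1).mem_of_tendsto (hx.prodMk_nhds hp)
    (Eventually.of_forall fun k => (hprox k).1)
  rw [Set.mem_ofPred_eq] at hmin
  exact ⟨hmin, fun q hq => eq_of_forall_proxCost_le hproper hbot hconv hmin hq⟩

theorem ProperConvexLsc.smulF {φ : (ι → ℝ) → EReal}
    (hφ : ProperConvexLsc φ) {c : ℝ} (hc : 0 < c) : ProperConvexLsc (smulF c φ) := by
  obtain ⟨⟨v, hv⟩, hbot, hlsc, hconv⟩ := hφ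
  have hc' : (0 : EReal) ≤ c := by exact_mod_cast hc.le
  refine ⟨⟨v, ?_⟩, fun u => ?_, ?_, fun x y t ht0 ht1 => ?_⟩
  · obtain ⟨r, hr⟩ : ∃ r : ℝ, φ v = r := ⟨_, (EReal.coe_toReal hv (hbot v)).symm⟩
    rw [_root_.smulF, hr, ← EReal.coe_mul]
    exact EReal.coe_ne_top _
  · exact (EReal.mul_ne_bot _ _).2 ⟨.inl (EReal.coe_ne_bot c), .inr (hbot u),
      .inl (EReal.coe_ne_top c), .inl hc'⟩
  · exact (EReal.continuous_const_mul hc.ne').comp_lowerSemicontinuous hlsc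
      fun a b hab => mul_le_mul_of_nonneg_left hab hc'
  · calc (c : EReal) * φ (t • x + (1 - t) • y)
        ≤ c * ((t : EReal) * φ x + ((1 - t : ℝ) : EReal) * φ y) :=
          mul_le_mul_of_nonneg_left (hconv x y t ht0 ht1) hc'
      _ = (t : EReal) * (c * φ x) + ((1 - t : ℝ) : EReal) * (c * φ y) := by
          rw [EReal.left_distrib_of_nonneg_of_ne_top hc' (EReal.coe_ne_top c), mul_left_comm,
            mul_left_comm (c : EReal)]

end Prox

theorem properConvexLsc_iotaCstar {m : ℕ} (b : Fin m → ℝ) : ProperConvexLsc (iotaCstar b) := by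
  refine ⟨⟨0, EReal.coe_ne_top _⟩, fun _ => EReal.coe_ne_bot _, ?_, fun x y t _ _ => ?_⟩
  · exact (continuous_coe_real_ereal.comp (by fun_prop)).lowerSemicontinuous
  · simp only [iotaCstar, add_dotProduct, smul_dotProduct, smul_eq_mul]
    norm_cast

theorem isT_of_tendsto {s m : ℕ} {n : Fin s → ℕ} {f : ∀ i : Fin s, (Fin (n i) → ℝ) → EReal}
    (hf : ∀ i, ProperConvexLsc (f i)) {b : Fin m → ℝ} {α : Fin s → ℝ} (hα : ∀ i, 0 < α i)
    {β : ℝ} (hβ : 0 < β) {v w : ℕ → FIdx n m → ℝ} {vlim wlim : FIdx n m → ℝ}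
    (hv : Tendsto v atTop (𝓝 vlim)) (hw : Tendsto w atTop (𝓝 wlim))
    (hT : ∀ k, isT f b α β (v k) (w k)) : isT f b α β vlim wlim := by
  have hblk : ∀ i, Continuous fun z : FIdx n m → ℝ => blk (xpart z) i := fun i =>
    continuous_pi fun j => continuous_apply _
  have hy : Continuous fun z : FIdx n m → ℝ => ypart z := continuous_pi fun r => continuous_apply _
  refine ⟨fun i => ?_, ?_⟩
  · exact isProx_of_tendsto ((hf i).smulF (div_pos (hα i) hβ)) ((hblk i).tendsto _ |>.comp hv)
      ((hblk i).tendsto _ |>.comp hw) fun k => (hT k).1 i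
  · exact isProx_of_tendsto ((properConvexLsc_iotaCstar b).smulF hβ) (hy.tendsto _ |>.comp hv)
      (hy.tendsto _ |>.comp hw) fun k => (hT k).2

theorem TM_continuous_general {s m : ℕ} {n : Fin s → ℕ}
    (f : ∀ i : Fin s, (Fin (n i) → ℝ) → EReal)
    (A : ∀ i : Fin s, Matrix (Fin m) (Fin (n i)) ℝ) (b : Fin m → ℝ)
    (hf : ∀ i, ProperConvexLsc (f i))
    (α : Fin s → ℝ) (hα : ∀ i, 0 < α i) (β : ℝ) (hβ : 0 < β)
    (M0 M1 M2 : Matrix (FIdx n m) (FIdx n m) ℝ) :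
    ∀ (u w z : ℕ → FIdx n m → ℝ) (ulim wlim zlim : FIdx n m → ℝ),
      (∀ k, isTM f A b α β M0 M1 M2 (u k) (w k) (z k)) →
      Tendsto u atTop (nhds ulim) → Tendsto w atTop (nhds wlim) →
      Tendsto z atTop (nhds zlim) →
      isTM f A b α β M0 M1 M2 ulim wlim zlim := by
  intro u w z ulim wlim zlim hTM hu hw hz
  have hmulVec : ∀ (M : Matrix (FIdx n m) (FIdx n m) ℝ) {v : ℕ → FIdx n m → ℝ} {vlim},
      Tendsto v atTop (𝓝 vlim) → Tendsto (fun k => M.mulVec (v k)) atTop (𝓝 (M.mulVec vlim)) :=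
    fun M _ _ hv => ((continuous_const.matrix_mulVec continuous_id).tendsto _).comp hv
  exact isT_of_tendsto hf hα hβ (((hmulVec _ hz).add (hmulVec _ hu)).add (hmulVec _ hw)) hz hTM

/-- if `T_ℳ` is well-defined then it is continuous: whenever
`z^k = T_ℳ(u^k, w^k)` and `(u^k, w^k, z^k) → (u, w, z)`, one has `z = T_ℳ(u, w)`. -/
theorem TM_continuous {s m : ℕ} {n : Fin s → ℕ}
    (f : ∀ i : Fin s, (Fin (n i) → ℝ) → EReal)
    (A : ∀ i : Fin s, Matrix (Fin m) (Fin (n i)) ℝ) (b : Fin m → ℝ)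
    (hf : ∀ i, ProperConvexLsc (f i))
    (α : Fin s → ℝ) (hα : ∀ i, 0 < α i) (β : ℝ) (hβ : 0 < β)
    (M0 M1 M2 : Matrix (FIdx n m) (FIdx n m) ℝ)
    (hwd : TMWellDefined f A b α β M0 M1 M2) :
    ∀ (u w z : ℕ → FIdx n m → ℝ) (ulim wlim zlim : FIdx n m → ℝ),
      (∀ k, isTM f A b α β M0 M1 M2 (u k) (w k) (z k)) →
      Tendsto u atTop (nhds ulim) → Tendsto w atTop (nhds wlim) →
      Tendsto z atTop (nhds zlim) →
      isTM f A b α β M0 M1 M2 ulim wlim zlim :=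
  TM_continuous_general f A b hf α hα β hβ M0 M1 M2

end
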